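/- arXiv:2601.13005 — 6 statements merged into one kernel-verified Lean document; each statement's English description precedes it below -/
import Mathlib

section
/- Suppose f : ℕ → ℕ is computable and well-defined on c.e. sets, i.e., for all e, i, if W_e = W_i then W_{f(e)} = W_{f(i)}. Then for all e, i, W_e ⊆ W_i implies W_{f(e)} ⊆ W_{f(i)}. -/
/-- The `e`-th computably enumerable set of natural numbers: the domain of the
`e`-th partial computable function. -/
def Wce (e : ℕ) : Set ℕ :=
  {x | ((Denumerable.ofNat Nat.Partrec.Code e).eval x).Dom}

open Nat.Partrec (Code)
open Nat.Partrec.Code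

/-- Monotonicity Lemma: a computable function that is well-defined on c.e. sets is
monotone with respect to inclusion of c.e. sets. -/
theorem monotonicity_lemma (f : ℕ → ℕ) (hf : Computable f)
    (hwd : ∀ e i, Wce e = Wce i → Wce (f e) = Wce (f i)) :
    ∀ e i, Wce e ⊆ Wce i → Wce (f e) ⊆ Wce (f i) := by
  intro e i hsub x hx
  classical
  set F1 : Code × ℕ →. ℕ :=
    fun p => ((Denumerable.ofNat Code e).eval p.2).map (fun _ => 0) with hF1def
  set F2 : Code × ℕ →. ℕ :=
    fun p => ((Denumerable.ofNat Code (f (Encodable.encode p.1))).eval x).bind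
      (fun _ => ((Denumerable.ofNat Code i).eval p.2).map (fun _ => 0)) with hF2def
  have hF1 : Partrec F1 := by
    apply Partrec.map
    · exact eval_part.comp (Computable.const _) Computable.snd
    · exact (Computable.const 0).comp Computable.fst |>.to₂
  have hF2 : Partrec F2 := by
    apply Partrec.bind
    · exact eval_part.comp
        ((Computable.ofNat Code).comp (hf.comp (Computable.encode.comp Computable.fst)))
        (Computable.const x)
    · exact (Partrec.map
        (eval_part.comp (Computable.const _) (Computable.snd.comp Computable.fst))
        (((Computable.const 0).comp Computable.fst).to₂)).to₂
  obtain ⟨k, hk, hkspec⟩ := Partrec.merge hF1 hF2 (by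
    intro p y hy z hz
    simp only [hF1def, hF2def, Part.mem_map_iff, Part.mem_bind_iff] at hy hz
    obtain ⟨_, _, rfl⟩ := hy
    obtain ⟨_, _, _, _, rfl⟩ := hz
    rfl)
  have hk2 : Partrec₂ (fun c n => k (c, n)) := hk
  obtain ⟨c, hc⟩ := Nat.Partrec.Code.fixed_point₂ (f := fun c n => k (c, n)) hk2
  have hdom : ∀ n, n ∈ Wce (Encodable.encode c) ↔
      n ∈ Wce e ∨ (x ∈ Wce (f (Encodable.encode c)) ∧ n ∈ Wce i) := by
    intro n
    have hkey : (Denumerable.ofNat Code (Encodable.encode c)).eval n = k (c, n) := by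
      rw [Denumerable.ofNat_encode]; exact congrFun hc n
    simp only [Wce, Set.mem_setOf_eq, hkey, Part.dom_iff_mem]
    constructor
    · rintro ⟨y, hy⟩
      rcases (hkspec (c, n) y).1 hy with h | h
      · left
        obtain ⟨z, hz, _⟩ := Part.mem_map_iff _ |>.1 h
        exact ⟨z, hz⟩
      · right
        obtain ⟨z, hz, h2⟩ := Part.mem_bind_iff.1 h
        obtain ⟨w, hw, _⟩ := Part.mem_map_iff _ |>.1 h2
        exact ⟨⟨z, hz⟩, ⟨w, hw⟩⟩
    · rintro (⟨y, hy⟩ | ⟨⟨y, hy⟩, ⟨w, hw⟩⟩)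
      · exact ⟨0, (hkspec (c, n) 0).2 (Or.inl (Part.mem_map_iff _ |>.2 ⟨y, hy, rfl⟩))⟩
      · exact ⟨0, (hkspec (c, n) 0).2 (Or.inr (Part.mem_bind_iff.2
          ⟨y, hy, Part.mem_map_iff _ |>.2 ⟨w, hw, rfl⟩⟩))⟩
  by_cases hxc : x ∈ Wce (f (Encodable.encode c))
  · have hWc : Wce (Encodable.encode c) = Wce i := by
      ext n
      rw [hdom n]
      constructor
      · rintro (h | ⟨_, h⟩)
        · exact hsub h
        · exact h
      · intro h; exact Or.inr ⟨hxc, h⟩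
    have := hwd _ _ hWc
    rwa [this] at hxc
  · exfalso
    have hWc : Wce (Encodable.encode c) = Wce e := by
      ext n
      rw [hdom n]
      constructor
      · rintro (h | ⟨h, _⟩)
        · exact h
        · exact absurd h hxc
      · exact Or.inl
    have := hwd _ _ hWc
    rw [this] at hxc
    exact hxc hx
end

section
/- For any two computable well-orderings A and B of ℕ with order types β < α respectively (both computable ordinals), E_min(A) is not computably reducible to E_min(B). -/
/-- A computable well-ordering of ℕ: a computable (Bool-valued) binary relation
whose associated strict relation is a well-order on ℕ. -/
structure CompWO where
  r : ℕ → ℕ → Bool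
  comp : Computable₂ r
  wo : IsWellOrder ℕ (fun a b => r a b = true)

/-- `m` is the `A`-least element of `S`. -/
def IsMinOf (A : CompWO) (S : Set ℕ) (m : ℕ) : Prop :=
  m ∈ S ∧ ∀ x ∈ S, A.r x m = false

/-- The equivalence relation `E_min(A)` on indices of c.e. sets: `W_e` and `W_i`
have the same `A`-least element, or are both empty. -/
def Emin (A : CompWO) (e i : ℕ) : Prop :=
  (Wce e = ∅ ∧ Wce i = ∅) ∨ ∃ m, IsMinOf A (Wce e) m ∧ IsMinOf A (Wce i) m

/-- Computable reducibility of binary relations on ℕ. -/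
def CompReducible (E F : ℕ → ℕ → Prop) : Prop :=
  ∃ h : ℕ → ℕ, Computable h ∧ ∀ x y, E x y ↔ F (h x) (h y)

/-- The order type of a computable well-ordering. -/
noncomputable def CompWO.otype (A : CompWO) : Ordinal :=
  @Ordinal.type ℕ (fun a b => A.r a b = true) A.wo

/-- The `A`-rank of an element: the order type of its set of predecessors. -/
noncomputable def CompWO.rank (A : CompWO) (a : ℕ) : Ordinal :=
  @Ordinal.typein ℕ (fun a b => A.r a b = true) A.wo a

/-!
Let `f` reduce `E_min(A)` to `E_min(B)`. Sending `n` to the `B`-least element `g n` of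
`W_{f(e_n)}`, where `e_n` indexes the final segment `[n, ∞)` of `A`, is well defined and
injective, and it is `A`-to-`B` order preserving; so `A` embeds into `B` and
`otype A ≤ otype B`. Each of these facts is proved by a diagonal argument with the recursion
theorem: we build an index `d` whose set `W_d` is one of two final segments of `A`, chosen
according to a c.e. property of `W_{f d}`, and such that either choice contradicts the
reduction.
-/

open Nat.Partrec (Code)
open Nat.Partrec.Code

lemma wce_encode (c : Code) : Wce (Encodable.encode c) = {x | (c.eval x).Dom} := by
  simp [Wce, Denumerable.ofNat_encode]

lemma REPred.comp {α β : Type*} [Primcodable α] [Primcodable β] {p : β → Prop} (hp : REPred p)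
    {f : α → β} (hf : Computable f) : REPred fun a => p (f a) :=
  Partrec.comp hp hf

@[simp]
lemma Part.dom_assert_some (p : Prop) : (Part.assert p fun _ => Part.some ()).Dom ↔ p :=
  ⟨fun ⟨h, _⟩ => h, fun h => ⟨h, trivial⟩⟩

lemma REPred.exists_wce_eq {p : ℕ → Prop} (hp : REPred p) : ∃ e, Wce e = {x | p x} := by
  obtain ⟨c, hc⟩ := exists_code.1 (hp.map (Computable.const 0).to₂)
  exact ⟨Encodable.encode c, by simp [wce_encode, hc]⟩

lemma rePred_mem_wce (x : ℕ) : REPred fun e => x ∈ Wce e :=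
  (eval_part.comp (Computable.ofNat Code) (Computable.const x)).dom_re

lemma rePred_wce_nonempty : REPred fun e => (Wce e).Nonempty := by
  -- search for a pair `(s, x)` such that the `e`-th program halts on `x` within `s` steps
  let search : ℕ → ℕ → Option Unit := fun e t =>
    (evaln t.unpair.1 (Denumerable.ofNat Code e) t.unpair.2).map fun _ => ()
  have hsearch : Computable₂ search :=
    (Primrec.option_map (primrec_evaln.comp (Primrec.pair (Primrec.pair
      (Primrec.fst.comp (Primrec.unpair.comp .snd)) ((Primrec.ofNat Code).comp .fst))
      (Primrec.snd.comp (Primrec.unpair.comp .snd)))) (Primrec.const ()).to₂).to_comp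
  refine (Partrec.rfindOpt hsearch).dom_re.of_eq fun e => ?_
  simp only [search, Nat.rfindOpt_dom, Option.mem_def, Option.map_eq_some_iff]
  constructor
  · rintro ⟨t, -, z, hz, -⟩
    exact ⟨t.unpair.2, (evaln_sound hz).1⟩
  · rintro ⟨x, hx⟩
    obtain ⟨s, hs⟩ := evaln_complete.1 (Part.get_mem hx)
    exact ⟨Nat.pair s x, (), _, by simpa using hs, trivial⟩

lemma exists_wce_fixedPoint {σ : Type*} [Primcodable σ] {F : ℕ → ℕ →. σ} (hF : Partrec₂ F) :
    ∃ e, Wce e = {x | (F e x).Dom} := by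
  obtain ⟨c, hc⟩ := fixed_point₂ (f := fun c x => (F (Encodable.encode c) x).map fun _ => 0)
    ((hF.comp (Computable.encode.comp .fst) .snd).map (Computable.const 0).to₂)
  exact ⟨Encodable.encode c, by simp [wce_encode, hc]⟩

open Classical in
lemma exists_wce_eq_ite {S T : Set ℕ} (hS : ComputablePred (· ∈ S))
    (hT : ComputablePred (· ∈ T)) (hST : S ⊆ T) {P : ℕ → Prop} (hP : REPred P) :
    ∃ e, Wce e = if P e then T else S := by
  obtain ⟨_, hS⟩ := hS
  obtain ⟨_, hT⟩ := hT
  let F : ℕ → ℕ →. Unit := fun e x =>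
    bif decide (x ∈ S) then Part.some ()
    else bif decide (x ∈ T) then Part.assert (P e) fun _ => Part.some () else Part.none
  have hF : Partrec₂ F :=
    Partrec.cond (hS.comp .snd) (Partrec.const' _)
      (Partrec.cond (hT.comp .snd) (hP.comp .fst) Partrec.none)
  obtain ⟨e, he⟩ := exists_wce_fixedPoint hF
  refine ⟨e, he.trans ?_⟩
  ext x
  by_cases hxS : x ∈ S
  · have hxT := hST hxS
    split_ifs <;> simp [F, hxS, hxT]
  · by_cases hxT : x ∈ T <;> split_ifs <;> simp [F, *]

namespace CompWO

instance isWellOrder (A : CompWO) : IsWellOrder ℕ (fun a b => A.r a b = true) := A.wo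

variable (A : CompWO)

def Ici (n : ℕ) : Set ℕ := {x | A.r x n = false}

lemma r_self (n : ℕ) : A.r n n = false :=
  Bool.eq_false_iff.2 (irrefl_of (fun a b => A.r a b = true) n)

lemma isMinOf_Ici (n : ℕ) : IsMinOf A (A.Ici n) n :=
  ⟨A.r_self n, fun _ hx => hx⟩

lemma computablePred_mem_Ici (n : ℕ) : ComputablePred (· ∈ A.Ici n) :=
  ComputablePred.computable_iff.2
    ⟨fun x => !A.r x n, Primrec.not.to_comp.comp (A.comp.comp .id (.const n)),
      funext fun x => by simp [Ici]⟩

variable {A}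

lemma Ici_subset_Ici {m n : ℕ} (hmn : A.r m n = true) : A.Ici n ⊆ A.Ici m := by
  intro x hx
  by_contra hxm
  have hxn := trans_of (fun a b => A.r a b = true) (Bool.not_eq_false _ ▸ hxm) hmn
  simp_all [Ici]

end CompWO

lemma IsMinOf.unique {A : CompWO} {S : Set ℕ} {m m' : ℕ}
    (hm : IsMinOf A S m) (hm' : IsMinOf A S m') : m = m' := by
  rcases trichotomous_of (fun a b => A.r a b = true) m m' with h | h | h
  · simp [hm'.2 m hm.1] at h
  · exact h
  · simp [hm.2 m' hm'.1] at h

lemma exists_isMinOf (A : CompWO) {S : Set ℕ} (hS : S.Nonempty) : ∃ m, IsMinOf A S m := by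
  have wf : WellFounded (fun a b => A.r a b = true) := IsWellFounded.wf
  exact ⟨wf.min S hS, wf.min_mem S hS,
    fun x hx => Bool.eq_false_iff.2 (wf.not_lt_min S hx)⟩

lemma emin_of_wce_eq (A : CompWO) {e e' : ℕ} (h : Wce e = Wce e') : Emin A e e' := by
  rcases (Wce e).eq_empty_or_nonempty with he | he
  · exact Or.inl ⟨he, h ▸ he⟩
  · obtain ⟨m, hm⟩ := exists_isMinOf A he
    exact Or.inr ⟨m, hm, h ▸ hm⟩

lemma Emin.wce_nonempty_iff {A : CompWO} {e e' : ℕ} (h : Emin A e e') :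
    (Wce e).Nonempty ↔ (Wce e').Nonempty := by
  rcases h with ⟨he, he'⟩ | ⟨m, hm, hm'⟩
  · simp [he, he']
  · exact iff_of_true ⟨m, hm.1⟩ ⟨m, hm'.1⟩

lemma Emin.isMinOf {A : CompWO} {e e' m : ℕ} (h : Emin A e e') (hm : IsMinOf A (Wce e) m) :
    IsMinOf A (Wce e') m := by
  rcases h with ⟨he, -⟩ | ⟨k, hk, hk'⟩
  · exact absurd hm.1 (he ▸ Set.notMem_empty m)
  · exact hk.unique hm ▸ hk'

section Reduction

variable {A B : CompWO} {f : ℕ → ℕ}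

lemma nonempty_wce_of_reduction (hf : Computable f)
    (hred : ∀ x y, Emin A x y ↔ Emin B (f x) (f y)) {e n : ℕ} (he : Wce e = A.Ici n) :
    (Wce (f e)).Nonempty := by
  obtain ⟨d, hd⟩ := exists_wce_eq_ite (S := ∅)
    (ComputablePred.computable_iff.2 ⟨fun _ => false, Computable.const _, by simp⟩)
    (A.computablePred_mem_Ici n) (Set.empty_subset _) (rePred_wce_nonempty.comp hf)
  split_ifs at hd with hfd
  · exact ((hred d e).1 (emin_of_wce_eq A (hd.trans he.symm))).wce_nonempty_iff.1 hfd
  · by_contra hfe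
    have hB : Emin B (f d) (f e) :=
      Or.inl ⟨Set.not_nonempty_iff_eq_empty.1 hfd, Set.not_nonempty_iff_eq_empty.1 hfe⟩
    have hd_ne := ((hred d e).2 hB).wce_nonempty_iff.2 ⟨n, he ▸ (A.isMinOf_Ici n).1⟩
    simp [hd] at hd_ne

lemma r_eq_false_of_reduction (hf : Computable f)
    (hred : ∀ x y, Emin A x y ↔ Emin B (f x) (f y)) {m n em en gm gn : ℕ}
    (hem : Wce em = A.Ici m) (hen : Wce en = A.Ici n) (hmn : A.r m n = true)
    (hgm : IsMinOf B (Wce (f em)) gm) (hgn : IsMinOf B (Wce (f en)) gn) :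
    B.r gn gm = false := by
  obtain ⟨d, hd⟩ := exists_wce_eq_ite (A.computablePred_mem_Ici n)
    (A.computablePred_mem_Ici m) (A.Ici_subset_Ici hmn) ((rePred_mem_wce gn).comp hf)
  split_ifs at hd with hgn_mem
  · exact (((hred em d).1 (emin_of_wce_eq A (hem.trans hd.symm))).isMinOf hgm).2 gn hgn_mem
  · exact absurd (((hred en d).1 (emin_of_wce_eq A (hen.trans hd.symm))).isMinOf hgn).1
      hgn_mem

lemma nonempty_relEmbedding_of_reduction (hf : Computable f)
    (hred : ∀ x y, Emin A x y ↔ Emin B (f x) (f y)) :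
    Nonempty ((fun a b => A.r a b = true) ↪r (fun a b => B.r a b = true)) := by
  choose e he using fun n => (A.computablePred_mem_Ici n).to_re.exists_wce_eq
  choose g hg using fun n => exists_isMinOf B (nonempty_wce_of_reduction hf hred (he n))
  have hinj : g.Injective := by
    intro m n hmn
    have hA : Emin A (e m) (e n) := (hred _ _).2 (Or.inr ⟨g m, hg m, hmn ▸ hg n⟩)
    exact (hA.isMinOf (he m ▸ A.isMinOf_Ici m)).unique (he n ▸ A.isMinOf_Ici n)
  refine ⟨RelEmbedding.ofMonotone g fun m n hmn => ?_⟩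
  rcases trichotomous_of (fun a b => B.r a b = true) (g m) (g n) with h | h | h
  · exact h
  · simp [hinj h, A.r_self] at hmn
  · simp [r_eq_false_of_reduction hf hred (he m) (he n) hmn (hg m) (hg n)] at h

end Reduction

/-- If the order type of the computable well-ordering B is strictly smaller than that
of A, then E_min(A) is not computably reducible to E_min(B). -/
theorem stmt4 (A B : CompWO) (h : B.otype < A.otype) :
    ¬ CompReducible (Emin A) (Emin B) := by
  rintro ⟨f, hf, hred⟩
  exact h.not_ge (Ordinal.type_le_iff'.2 (nonempty_relEmbedding_of_reduction hf hred))
end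

section
/- If E is an equivalence relation on c.e. sets (i.e., W_e = W_i implies e E i) that is computably reducible to E_min(A) for a computable well-ordering A, then there is a computable reduction from E to E_min(A) that is well-defined on c.e. sets. -/
/-!
Replace a reduction `r` of `E` to `E_min(A)` by `e ↦ u (r e)`, where `u` is a computable index map
with `W_{u e}` the `A`-upward closure of `W_e`. Since `A` is a well-ordering, `E_min(A)` holds of
`e, i` exactly when `W_e` and `W_i` have the same upward closure, and taking upward closures is
idempotent; so the new map is still a reduction, and it is well-defined on c.e. sets because
`W_e = W_i` forces `E e i`, hence `E_min(A) (r e) (r i)`, hence equal upward closures.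
-/

open Nat.Partrec (Code)
open Nat.Partrec.Code

theorem exists_computable_wce_eq_dom {σ : Type*} [Primcodable σ] {g : ℕ → ℕ →. σ}
    (hg : Partrec₂ g) :
    ∃ f : ℕ → ℕ, Computable f ∧ ∀ e, Wce (f e) = {x | (g e x).Dom} := by
  have hg' : Partrec₂ fun e x => (g e x).map Encodable.encode :=
    hg.map (Computable.encode.comp Computable.snd).to₂
  obtain ⟨c, hc⟩ := exists_code.1 (Partrec₂.unpaired'.2 hg')
  refine ⟨fun e => Encodable.encode (c.curry e),
    Computable.encode.comp (primrec₂_curry.to_comp.comp (Computable.const c) Computable.id), ?_⟩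
  intro e
  ext x
  simp [Wce, eval_curry, hc]

theorem mem_wce_iff_exists_evaln_isSome {e y : ℕ} :
    y ∈ Wce e ↔ ∃ k, (evaln k (Denumerable.ofNat Code e) y).isSome := by
  simp only [Wce, Set.mem_ofPred_eq, Part.dom_iff_mem, evaln_complete, Option.isSome_iff_exists]
  exact ⟨fun ⟨v, k, hk⟩ => ⟨k, v, hk⟩, fun ⟨k, v, hk⟩ => ⟨v, k, hk⟩⟩

theorem exists_computable_wce_eq_image {R : ℕ → ℕ → Bool} (hR : Computable₂ R) :
    ∃ f : ℕ → ℕ, Computable f ∧ ∀ e, Wce (f e) = {x | ∃ y ∈ Wce e, R y x = true} := by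
  -- search for `n = ⟪y, k⟫` such that `y` enters `W_e` within `k` steps and `R y x`
  let b : ℕ × ℕ → ℕ → Bool := fun p n =>
    (evaln n.unpair.2 (Denumerable.ofNat Code p.1) n.unpair.1).isSome && R n.unpair.1 p.2
  have hb : Computable₂ b := by
    have hy : Computable fun q : (ℕ × ℕ) × ℕ => q.2.unpair.1 :=
      Computable.fst.comp (Computable.unpair.comp Computable.snd)
    have hk : Computable fun q : (ℕ × ℕ) × ℕ => q.2.unpair.2 :=
      Computable.snd.comp (Computable.unpair.comp Computable.snd)
    have hc : Computable fun q : (ℕ × ℕ) × ℕ => Denumerable.ofNat Code q.1.1 :=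
      (Computable.ofNat Code).comp (Computable.fst.comp Computable.fst)
    have hev : Computable fun q : (ℕ × ℕ) × ℕ =>
        (evaln q.2.unpair.2 (Denumerable.ofNat Code q.1.1) q.2.unpair.1).isSome :=
      Primrec.option_isSome.to_comp.comp (primrec_evaln.to_comp.comp ((hk.pair hc).pair hy))
    exact Primrec.and.to_comp.comp hev (hR.comp hy (Computable.snd.comp Computable.fst))
  have hsearch :
      Partrec₂ fun e x => Nat.rfind (fun n => Part.some (b (e, x) n) : ℕ →. Bool) :=
    Partrec.rfind hb.partrec₂
  obtain ⟨f, hf, hWf⟩ := exists_computable_wce_eq_dom hsearch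
  refine ⟨f, hf, fun e => ?_⟩
  ext x
  refine (Set.ext_iff.1 (hWf e) x).trans (Nat.rfind_dom.trans ?_)
  simp only [Part.mem_some_iff, Part.some_dom, implies_true, and_true]
  constructor
  · rintro ⟨n, hn⟩
    simp only [b, Bool.and_eq_true, eq_comm (a := true)] at hn
    exact ⟨n.unpair.1, mem_wce_iff_exists_evaln_isSome.2 ⟨_, hn.1⟩, hn.2⟩
  · rintro ⟨y, hy, hyx⟩
    obtain ⟨k, hk⟩ := mem_wce_iff_exists_evaln_isSome.1 hy
    exact ⟨Nat.pair y k, by simp [b, hk, hyx]⟩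

namespace CompWO

variable (A : CompWO) {S : Set ℕ} {m : ℕ}

theorem r_trans {a b c : ℕ} (hab : A.r a b = true) (hbc : A.r b c = true) : A.r a c = true :=
  haveI := A.wo
  trans_of (fun a b => A.r a b = true) hab hbc

theorem r_irrefl (a : ℕ) : A.r a a = false := by
  have := A.wo
  simpa using irrefl_of (fun a b => A.r a b = true) a

theorem r_trichotomous (a b : ℕ) : A.r a b = true ∨ a = b ∨ A.r b a = true :=
  haveI := A.wo
  trichotomous_of (fun a b => A.r a b = true) a b

theorem exists_isMinOf (hS : S.Nonempty) : ∃ m, IsMinOf A S m := by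
  have wf : WellFounded fun a b => A.r a b = true := A.wo.wf
  exact ⟨wf.min S hS, wf.min_mem S hS, fun x hx => by simpa using wf.not_lt_min S hx⟩

theorem _root_.IsMinOf.unique_s7 {A : CompWO} {m' : ℕ} (h : IsMinOf A S m) (h' : IsMinOf A S m') :
    m = m' := by
  rcases A.r_trichotomous m m' with hlt | heq | hgt
  · simp [h'.2 m h.1] at hlt
  · exact heq
  · simp [h.2 m' h'.1] at hgt

def upClosure (S : Set ℕ) : Set ℕ := {x | ∃ y ∈ S, A.r y x = true ∨ y = x}

theorem subset_upClosure : S ⊆ A.upClosure S :=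
  fun y hy => ⟨y, hy, Or.inr rfl⟩

theorem upClosure_eq_empty_iff : A.upClosure S = ∅ ↔ S = ∅ := by
  refine ⟨fun h => Set.subset_empty_iff.1 (h ▸ A.subset_upClosure), ?_⟩
  rintro rfl
  simp [upClosure]

theorem upClosure_upClosure : A.upClosure (A.upClosure S) = A.upClosure S := by
  refine Set.Subset.antisymm ?_ A.subset_upClosure
  rintro x ⟨y, ⟨z, hz, hzy⟩, hyx⟩
  refine ⟨z, hz, ?_⟩
  rcases hzy with hzy | rfl
  · rcases hyx with hyx | rfl
    · exact Or.inl (A.r_trans hzy hyx)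
    · exact Or.inl hzy
  · exact hyx

theorem upClosure_eq_of_isMinOf (h : IsMinOf A S m) :
    A.upClosure S = {x | A.r m x = true ∨ m = x} := by
  ext x
  refine ⟨?_, fun hx => ⟨m, h.1, hx⟩⟩
  rintro ⟨y, hy, hyx⟩
  rcases A.r_trichotomous m y with hmy | rfl | hym
  · rcases hyx with hyx | rfl
    · exact Or.inl (A.r_trans hmy hyx)
    · exact Or.inl hmy
  · exact hyx
  · simp [h.2 y hy] at hym

theorem _root_.IsMinOf.upClosure {A : CompWO} (h : IsMinOf A S m) :
    IsMinOf A (A.upClosure S) m := by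
  refine ⟨A.subset_upClosure h.1, ?_⟩
  rw [A.upClosure_eq_of_isMinOf h]
  rintro x (hmx | rfl)
  · refine Bool.eq_false_iff.2 fun hxm => ?_
    simpa [A.r_irrefl m] using A.r_trans hmx hxm
  · exact A.r_irrefl m

theorem exists_computable_wce_eq_upClosure :
    ∃ f : ℕ → ℕ, Computable f ∧ ∀ e, Wce (f e) = A.upClosure (Wce e) := by
  have hR : Computable₂ fun y x => A.r y x || decide (y = x) :=
    Primrec.or.to_comp.comp₂ A.comp (Primrec.eq.decide.to_comp.to₂)
  obtain ⟨f, hf, hWf⟩ := exists_computable_wce_eq_image hR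
  exact ⟨f, hf, fun e => by simp [hWf, upClosure]⟩

end CompWO

theorem emin_iff_upClosure_eq (A : CompWO) (e i : ℕ) :
    Emin A e i ↔ A.upClosure (Wce e) = A.upClosure (Wce i) := by
  refine ⟨?_, fun hU => ?_⟩
  · rintro (⟨he, hi⟩ | ⟨m, he, hi⟩)
    · rw [he, hi]
    · rw [A.upClosure_eq_of_isMinOf he, A.upClosure_eq_of_isMinOf hi]
  rcases (Wce e).eq_empty_or_nonempty with he | he
  · exact Or.inl ⟨he, A.upClosure_eq_empty_iff.1 (hU ▸ A.upClosure_eq_empty_iff.2 he)⟩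
  obtain ⟨m, hm⟩ := A.exists_isMinOf he
  have hmi : IsMinOf A (A.upClosure (Wce i)) m := hU ▸ hm.upClosure
  have hi : (Wce i).Nonempty := Set.nonempty_iff_ne_empty.2 fun h =>
    (A.upClosure_eq_empty_iff.2 h).subset hmi.1
  obtain ⟨m', hm'⟩ := A.exists_isMinOf hi
  exact Or.inr ⟨m, hm, hm'.upClosure.unique_s7 hmi ▸ hm'⟩

theorem stmt7_general (A : CompWO) (E : ℕ → ℕ → Prop)
    (hEce : ∀ e i, Wce e = Wce i → E e i)
    (h : CompReducible E (Emin A)) :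
    ∃ f : ℕ → ℕ, Computable f ∧ (∀ x y, E x y ↔ Emin A (f x) (f y)) ∧
      ∀ e i, Wce e = Wce i → Wce (f e) = Wce (f i) := by
  obtain ⟨r, hr, hEr⟩ := h
  obtain ⟨u, hu, hWu⟩ := A.exists_computable_wce_eq_upClosure
  have hEu : ∀ e i, Emin A (u e) (u i) ↔ Emin A e i := by
    simp only [emin_iff_upClosure_eq, hWu, CompWO.upClosure_upClosure, implies_true]
  refine ⟨u ∘ r, hu.comp hr, fun x y => (hEr x y).trans (hEu _ _).symm, fun e i hW => ?_⟩
  have hU := (emin_iff_upClosure_eq A _ _).1 ((hEr e i).1 (hEce e i hW))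
  simp only [Function.comp_apply, hWu, hU]

/-- If an equivalence relation on c.e. sets is computably reducible to E_min(A),
then there is such a reduction that is moreover well-defined on c.e. sets. -/
theorem stmt7 (A : CompWO) (E : ℕ → ℕ → Prop) (hE : Equivalence E)
    (hEce : ∀ e i, Wce e = Wce i → E e i)
    (h : CompReducible E (Emin A)) :
    ∃ f : ℕ → ℕ, Computable f ∧ (∀ x y, E x y ↔ Emin A (f x) (f y)) ∧
      ∀ e i, Wce e = Wce i → Wce (f e) = Wce (f i) :=
  stmt7_general A E hEce h
end

section
/- For a variety V of finite type and the class C of n-generated (or finitely generated) algebras in V: C satisfies the ascending chain condition on congruence lattices if and only if every algebra in C has a finite presentation. -/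
/-- An algebraic signature: a family of function symbols with arities. -/
structure Signature where
  I : Type
  arity : I → ℕ

/-- An algebra over a signature. -/
structure Alg (σ : Signature) where
  carrier : Type
  op : ∀ i : σ.I, (Fin (σ.arity i) → carrier) → carrier

/-- A congruence relation: an equivalence relation compatible with all operations. -/
def IsCongruence {σ : Signature} (A : Alg σ) (r : A.carrier → A.carrier → Prop) : Prop :=
  Equivalence r ∧ ∀ (i : σ.I) (x y : Fin (σ.arity i) → A.carrier),
    (∀ j, r (x j) (y j)) → r (A.op i x) (A.op i y)

/-- The quotient algebra of `A` by a relation `r` (intended: a congruence). -/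
noncomputable def quotAlg {σ : Signature} (A : Alg σ) (r : A.carrier → A.carrier → Prop) :
    Alg σ where
  carrier := Quot r
  op := fun i x => Quot.mk r (A.op i fun j => (x j).out)

/-- `f` is a homomorphism from `A` to `B`. -/
def IsHom {σ : Signature} (A B : Alg σ) (f : A.carrier → B.carrier) : Prop :=
  ∀ (i : σ.I) (x : Fin (σ.arity i) → A.carrier), f (A.op i x) = B.op i fun j => f (x j)

/-- `B` is a homomorphic image of `A`. -/
def HomImage {σ : Signature} (A B : Alg σ) : Prop :=
  ∃ f : A.carrier → B.carrier, IsHom A B f ∧ Function.Surjective f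

/-- `A` and `B` are isomorphic algebras. -/
def AlgIso {σ : Signature} (A B : Alg σ) : Prop :=
  ∃ f : A.carrier ≃ B.carrier, IsHom A B f
/-- Terms over a signature with variables from `X`. -/
inductive Term (σ : Signature) (X : Type) : Type where
  | var : X → Term σ X
  | app : (i : σ.I) → (Fin (σ.arity i) → Term σ X) → Term σ X

/-- The term algebra over `X`. -/
def termAlg (σ : Signature) (X : Type) : Alg σ := ⟨Term σ X, Term.app⟩

/-- Substitution of terms for variables (and its extension to all terms). -/
def Term.subst {σ : Signature} {X Y : Type} (f : X → Term σ Y) : Term σ X → Term σ Y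
  | .var x => f x
  | .app i t => .app i fun j => (t j).subst f

/-- The congruence generated by a relation `R` on an algebra: the intersection of all
congruences containing `R`. -/
def congGen {σ : Signature} (A : Alg σ) (R : A.carrier → A.carrier → Prop) :
    A.carrier → A.carrier → Prop :=
  fun a b => ∀ r, IsCongruence A r → (∀ x y, R x y → r x y) → r a b

/-- The congruence on the term algebra over `X` generated by the equations `R` together
with all substitution instances of the equational laws `Λ` of the variety. -/
def presCong (σ : Signature) (Λ : Set (Term σ ℕ × Term σ ℕ)) (X : Type)
    (R : Set (Term σ X × Term σ X)) : Term σ X → Term σ X → Prop :=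
  congGen (termAlg σ X) fun s t =>
    (s, t) ∈ R ∨ ∃ l ∈ Λ, ∃ f : ℕ → Term σ X, s = l.1.subst f ∧ t = l.2.subst f

/-- The algebra presented by ⟨X | R⟩ in the variety with laws `Λ`. -/
noncomputable def presAlg (σ : Signature) (Λ : Set (Term σ ℕ × Term σ ℕ)) (X : Type)
    (R : Set (Term σ X × Term σ X)) : Alg σ :=
  quotAlg (termAlg σ X) (presCong σ Λ X R)

/-- A congruence is proper if it identifies two distinct elements. -/
def IsProperCong {σ : Signature} (A : Alg σ) (r : A.carrier → A.carrier → Prop) : Prop :=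
  ∃ a b, r a b ∧ a ≠ b

/-- The ascending chain condition on the congruence lattice of an algebra:
every ascending chain of congruences stabilizes. -/
def HasACCcong {σ : Signature} (A : Alg σ) : Prop :=
  ∀ c : ℕ → (A.carrier → A.carrier → Prop),
    (∀ k, IsCongruence A (c k)) → (∀ k a b, c k a b → c (k + 1) a b) →
    ∃ N, ∀ m, N ≤ m → c m = c N

/-- An algebra is Hopfian if it is not isomorphic to any of its proper quotients. -/
def Hopfian {σ : Signature} (A : Alg σ) : Prop :=
  ∀ r, IsCongruence A r → IsProperCong A r → ¬ AlgIso A (quotAlg A r)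


/-! Congruences of a quotient `A ⧸ θ` correspond to congruences of `A` above `θ`, so everything
happens in the term algebra. If the free algebra `presAlg σ Λ (Fin k) ∅` has ACC, the congruences
generated by the finite subsets of `R` have a maximal member, which is then the congruence
generated by all of `R`. Conversely, the union `U` of an ascending chain of congruences above the
laws is again a congruence, because operations are finitary. The algebra presented by `U` is
isomorphic to a finitely presented one; pulling that presentation back along the isomorphism
(substituting lifts of the images of the generators, as in Tietze transformations) gives finitely
many pairs generating `U`, and these already lie in one member of the chain. -/

section Presentations

variable {σ : Signature}

theorem Equivalence.quot_out_mk_rel {α : Type} {r : α → α → Prop} (hr : Equivalence r) (a : α) :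
    r (Quot.mk r a).out a :=
  (hr.quot_mk_eq_iff _ _).mp (Quot.out_eq _)

theorem congGen_isCongruence (A : Alg σ) (R : A.carrier → A.carrier → Prop) :
    IsCongruence A (congGen A R) :=
  ⟨⟨fun a _ hr _ => hr.1.refl a, fun h r hr hR => hr.1.symm (h r hr hR),
    fun h₁ h₂ r hr hR => hr.1.trans (h₁ r hr hR) (h₂ r hr hR)⟩,
    fun i _ _ h r hr hR => hr.2 i _ _ fun j => h j r hr hR⟩

theorem isCongruence_iUnion_of_monotone {A : Alg σ} {c : ℕ → A.carrier → A.carrier → Prop}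
    (hc : ∀ n, IsCongruence A (c n)) (hmono : Monotone c) :
    IsCongruence A fun a b => ∃ n, c n a b := by
  refine ⟨⟨fun a => ⟨0, (hc 0).1.refl a⟩, fun ⟨n, h⟩ => ⟨n, (hc n).1.symm h⟩, ?_⟩, ?_⟩
  · rintro a b d ⟨m, hm⟩ ⟨n, hn⟩
    exact ⟨max m n, (hc _).1.trans (hmono (le_max_left m n) _ _ hm)
      (hmono (le_max_right m n) _ _ hn)⟩
  · intro i x y h
    choose n hn using h
    obtain ⟨N, hN⟩ := Finite.exists_le n
    exact ⟨N, (hc N).2 i x y fun j => hmono (hN j) _ _ (hn j)⟩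

section Homomorphisms

variable {A B C : Alg σ}

theorem IsHom.comp {f : A.carrier → B.carrier} {g : B.carrier → C.carrier} (hf : IsHom A B f)
    (hg : IsHom B C g) : IsHom A C (g ∘ f) := by
  intro i x
  simp only [Function.comp, hf i x, hg i]

theorem IsHom.symm {e : A.carrier ≃ B.carrier} (he : IsHom A B e) : IsHom B A e.symm := by
  intro i x
  apply e.injective
  simp only [he i, Equiv.apply_symm_apply]

theorem quotAlg_mk_isHom {θ : A.carrier → A.carrier → Prop} (hθ : IsCongruence A θ) :
    IsHom A (quotAlg A θ) (Quot.mk θ) :=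
  fun i x => Quot.sound (hθ.2 i _ _ fun j => hθ.1.symm (hθ.1.quot_out_mk_rel (x j)))

end Homomorphisms

section Terms

variable {X Y Z : Type}

theorem Term.subst_isHom (f : X → Term σ Y) : IsHom (termAlg σ X) (termAlg σ Y) (Term.subst f) :=
  fun _ _ => rfl

theorem Term.subst_subst (f : X → Term σ Y) (g : Y → Term σ Z) (t : Term σ X) :
    (t.subst f).subst g = t.subst fun x => (f x).subst g := by
  induction t with
  | var _ => rfl
  | app i x ih => exact congrArg (Term.app i) (funext ih)

theorem IsHom.termAlg_ext {B : Alg σ} {h h' : Term σ X → B.carrier}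
    (hh : IsHom (termAlg σ X) B h) (hh' : IsHom (termAlg σ X) B h')
    (hv : ∀ v, h (.var v) = h' (.var v)) (t : Term σ X) : h t = h' t := by
  induction t with
  | var v => exact hv v
  | app i x ih => exact (hh i x).trans ((congrArg (B.op i) (funext ih)).trans (hh' i x).symm)

theorem IsCongruence.rel_subst_of_forall_var {r : Term σ X → Term σ X → Prop}
    (hr : IsCongruence (termAlg σ X) r) {f : X → Term σ X} (hf : ∀ v, r (.var v) (f v))
    (t : Term σ X) : r t (t.subst f) := by
  induction t with
  | var v => exact hf v
  | app i x ih => exact hr.2 i _ _ ih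

theorem exists_subst_of_isHom_quotAlg {θ : Term σ Y → Term σ Y → Prop}
    (hθ : IsCongruence (termAlg σ Y) θ) {g : Term σ X → Quot θ}
    (hg : IsHom (termAlg σ X) (quotAlg (termAlg σ Y) θ) g) :
    ∃ u : X → Term σ Y, ∀ t, Quot.mk θ (t.subst u) = g t :=
  ⟨fun v => (g (.var v)).out, IsHom.termAlg_ext ((Term.subst_isHom _).comp (quotAlg_mk_isHom hθ))
    hg fun _ => Quot.out_eq _⟩

end Terms

section PresCong

variable {Λ : Set (Term σ ℕ × Term σ ℕ)} {X Y : Type}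

theorem presCong_isCongruence (Λ : Set (Term σ ℕ × Term σ ℕ)) (X : Type)
    (R : Set (Term σ X × Term σ X)) : IsCongruence (termAlg σ X) (presCong σ Λ X R) :=
  congGen_isCongruence _ _

theorem presCong_of_mem {R : Set (Term σ X × Term σ X)} {p : Term σ X × Term σ X} (h : p ∈ R) :
    presCong σ Λ X R p.1 p.2 :=
  fun _ _ hR => hR _ _ (Or.inl h)

theorem presCong_of_law {R : Set (Term σ X × Term σ X)} {l : Term σ ℕ × Term σ ℕ} (hl : l ∈ Λ)
    (f : ℕ → Term σ X) : presCong σ Λ X R (l.1.subst f) (l.2.subst f) :=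
  fun _ _ hR => hR _ _ (Or.inr ⟨l, hl, f, rfl, rfl⟩)

theorem presCong_le {R : Set (Term σ X × Term σ X)} {r : Term σ X → Term σ X → Prop}
    (hr : IsCongruence (termAlg σ X) r) (hR : ∀ p ∈ R, r p.1 p.2)
    (hΛ : ∀ l ∈ Λ, ∀ f : ℕ → Term σ X, r (l.1.subst f) (l.2.subst f)) :
    presCong σ Λ X R ≤ r := by
  intro a b h
  refine h r hr ?_
  rintro _ _ (hab | ⟨l, hl, f, rfl, rfl⟩)
  exacts [hR _ hab, hΛ l hl f]

theorem presCong_mono {R R' : Set (Term σ X × Term σ X)} (h : R ⊆ R') :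
    presCong σ Λ X R ≤ presCong σ Λ X R' :=
  presCong_le (presCong_isCongruence Λ X R') (fun _ hp => presCong_of_mem (h hp))
    fun _ hl f => presCong_of_law hl f

theorem presCong_setOf_eq {r : Term σ X → Term σ X → Prop} (hr : IsCongruence (termAlg σ X) r)
    (hΛ : ∀ l ∈ Λ, ∀ f : ℕ → Term σ X, r (l.1.subst f) (l.2.subst f)) :
    presCong σ Λ X {p | r p.1 p.2} = r :=
  le_antisymm (presCong_le hr (fun _ hp => hp) hΛ) fun a b h => presCong_of_mem (p := (a, b)) h

theorem presCong_subst {R : Set (Term σ X × Term σ X)} {E : Set (Term σ Y × Term σ Y)}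
    {f : X → Term σ Y} (hf : ∀ p ∈ R, presCong σ Λ Y E (p.1.subst f) (p.2.subst f)) {a b : Term σ X}
    (h : presCong σ Λ X R a b) : presCong σ Λ Y E (a.subst f) (b.subst f) := by
  have hE := presCong_isCongruence Λ Y E
  refine presCong_le (r := fun a b => presCong σ Λ Y E (a.subst f) (b.subst f))
    ⟨⟨fun _ => hE.1.refl _, hE.1.symm, hE.1.trans⟩, fun i _ _ h => hE.2 i _ _ h⟩ hf ?_ a b h
  intro l hl g
  simp only [Term.subst_subst]
  exact presCong_of_law hl _

theorem presCong_iff_mk_eq {R : Set (Term σ X × Term σ X)} {a b : Term σ X} :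
    presCong σ Λ X R a b ↔ Quot.mk (presCong σ Λ X R) a = Quot.mk (presCong σ Λ X R) b :=
  ((presCong_isCongruence Λ X R).1.quot_mk_eq_iff a b).symm

theorem presAlg_mk_isHom (R : Set (Term σ X × Term σ X)) :
    IsHom (termAlg σ X) (presAlg σ Λ X R) (Quot.mk _) :=
  quotAlg_mk_isHom (presCong_isCongruence Λ X R)

theorem algIso_presAlg_of_presCong_eq {R R' : Set (Term σ X × Term σ X)}
    (h : presCong σ Λ X R = presCong σ Λ X R') : AlgIso (presAlg σ Λ X R) (presAlg σ Λ X R') := by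
  unfold presAlg
  rw [h]
  exact ⟨Equiv.refl _, fun _ _ => rfl⟩

theorem exists_finite_presCong_eq_of_algIso [Finite X] {S R' : Set (Term σ X × Term σ X)}
    (hR' : R'.Finite) (hiso : AlgIso (presAlg σ Λ X S) (presAlg σ Λ X R')) :
    ∃ E : Set (Term σ X × Term σ X), E.Finite ∧ presCong σ Λ X E = presCong σ Λ X S := by
  obtain ⟨φ, hφ⟩ := hiso
  obtain ⟨u, hu⟩ := exists_subst_of_isHom_quotAlg (presCong_isCongruence Λ X R')
    ((presAlg_mk_isHom S).comp hφ)
  obtain ⟨w, hw⟩ := exists_subst_of_isHom_quotAlg (presCong_isCongruence Λ X S)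
    ((presAlg_mk_isHom R').comp hφ.symm)
  replace hu (t : Term σ X) :
      φ (Quot.mk (presCong σ Λ X S) t) = Quot.mk (presCong σ Λ X R') (t.subst u) :=
    (hu t).symm
  replace hw (t : Term σ X) :
      φ.symm (Quot.mk (presCong σ Λ X R') t) = Quot.mk (presCong σ Λ X S) (t.subst w) :=
    (hw t).symm
  -- Each generator is identified with its image under `φ.symm ∘ φ`, and `R'` is pulled back
  -- along `φ.symm`.
  let E := Set.range (fun v => (Term.var v, (u v).subst w)) ∪
    Prod.map (Term.subst w) (Term.subst w) '' R'
  have hES : ∀ p ∈ E, presCong σ Λ X S p.1 p.2 := by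
    rintro _ (⟨v, rfl⟩ | ⟨p, hp, rfl⟩) <;> rw [presCong_iff_mk_eq]
    · exact ((φ.symm_apply_apply _).symm.trans (congrArg φ.symm (hu (.var v)))).trans (hw _)
    · exact (hw p.1).symm.trans
        ((congrArg φ.symm (presCong_iff_mk_eq.mp (presCong_of_mem hp))).trans (hw p.2))
  have hE := presCong_isCongruence Λ X E
  have hback (t : Term σ X) : presCong σ Λ X E t ((t.subst u).subst w) := by
    rw [Term.subst_subst]
    exact hE.rel_subst_of_forall_var
      (fun v => presCong_of_mem (p := (.var v, (u v).subst w)) (Or.inl ⟨v, rfl⟩)) t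
  refine ⟨E, (Set.finite_range _).union (hR'.image _), le_antisymm
    (presCong_le (presCong_isCongruence Λ X S) hES fun _ hl f => presCong_of_law hl f) ?_⟩
  intro s t hst
  have hR'st : presCong σ Λ X R' (s.subst u) (t.subst u) := by
    rw [presCong_iff_mk_eq, ← hu, ← hu]
    exact congrArg φ (presCong_iff_mk_eq.mp hst)
  have hEst := presCong_subst (E := E)
    (fun p hp => presCong_of_mem (p := Prod.map _ _ p) (Or.inr ⟨p, hp, rfl⟩)) hR'st
  exact hE.1.trans (hback s) (hE.1.trans hEst (hE.1.symm (hback t)))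

end PresCong

section CongruenceLattice

variable {A : Alg σ}

abbrev CongAbove (A : Alg σ) (θ : A.carrier → A.carrier → Prop) :=
  {r : A.carrier → A.carrier → Prop // IsCongruence A r ∧ θ ≤ r}

theorem hasACCcong_iff_wellFoundedGT : HasACCcong A ↔ WellFoundedGT (CongAbove A ⊥) := by
  rw [wellFoundedGT_iff_monotone_chain_condition]
  constructor
  · intro h f
    obtain ⟨N, hN⟩ := h (fun n => (f n).1) (fun n => (f n).2.1) fun n => f.mono n.le_succ
    exact ⟨N, fun m hm => Subtype.ext (hN m hm).symm⟩
  · intro h c hc hmono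
    obtain ⟨N, hN⟩ := h ⟨fun n => ⟨c n, hc n, bot_le⟩, monotone_nat_of_le_succ hmono⟩
    exact ⟨N, fun m hm => congrArg Subtype.val (hN m hm).symm⟩

noncomputable def congAboveQuotAlgOrderIso {θ : A.carrier → A.carrier → Prop}
    (hθ : IsCongruence A θ) : CongAbove (quotAlg A θ) ⊥ ≃o CongAbove A θ where
  toFun r := ⟨fun a b => r.1 (Quot.mk θ a) (Quot.mk θ b),
    ⟨⟨fun _ => r.2.1.1.refl _, r.2.1.1.symm, r.2.1.1.trans⟩, fun i x y h => by
      simpa only [quotAlg_mk_isHom hθ i] using r.2.1.2 i _ _ h⟩,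
    fun a b h => by simpa only [Quot.sound h] using r.2.1.1.refl _⟩
  invFun s :=
    ⟨fun x y => s.1 x.out y.out,
      ⟨⟨fun _ => s.2.1.1.refl _, s.2.1.1.symm, s.2.1.1.trans⟩, fun i x y h =>
        s.2.1.1.trans (s.2.2 _ _ (hθ.1.quot_out_mk_rel _))
          (s.2.1.1.trans (s.2.1.2 i _ _ h) (s.2.1.1.symm (s.2.2 _ _ (hθ.1.quot_out_mk_rel _))))⟩,
      bot_le⟩
  left_inv r := by
    ext (x : Quot θ) (y : Quot θ)
    simp only [Quot.out_eq]
  right_inv s := by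
    ext a b
    exact ⟨fun h => s.2.1.1.trans (s.2.1.1.symm (s.2.2 _ _ (hθ.1.quot_out_mk_rel a)))
        (s.2.1.1.trans h (s.2.2 _ _ (hθ.1.quot_out_mk_rel b))),
      fun h => s.2.1.1.trans (s.2.2 _ _ (hθ.1.quot_out_mk_rel a))
        (s.2.1.1.trans h (s.2.1.1.symm (s.2.2 _ _ (hθ.1.quot_out_mk_rel b))))⟩
  map_rel_iff' {r r'} := by
    refine ⟨fun h (x : Quot θ) (y : Quot θ) hxy => ?_, fun h a b => h _ _⟩
    have hr' : r'.1 (Quot.mk θ x.out) (Quot.mk θ y.out) :=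
      h x.out y.out (show r.1 (Quot.mk θ x.out) (Quot.mk θ y.out) by simpa only [Quot.out_eq])
    simpa only [Quot.out_eq] using hr'

theorem hasACCcong_quotAlg_iff {θ : A.carrier → A.carrier → Prop} (hθ : IsCongruence A θ) :
    HasACCcong (quotAlg A θ) ↔ WellFoundedGT (CongAbove A θ) := by
  rw [hasACCcong_iff_wellFoundedGT]
  exact ⟨fun _ => (congAboveQuotAlgOrderIso hθ).symm.strictMono.wellFoundedGT,
    fun _ => (congAboveQuotAlgOrderIso hθ).strictMono.wellFoundedGT⟩

end CongruenceLattice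

section ChainConditions

variable {Λ : Set (Term σ ℕ × Term σ ℕ)} {X : Type}

theorem exists_finite_presCong_eq_of_wellFoundedGT
    [hwf : WellFoundedGT (CongAbove (termAlg σ X) (presCong σ Λ X ∅))]
    (R : Set (Term σ X × Term σ X)) :
    ∃ F ⊆ R, F.Finite ∧ presCong σ Λ X F = presCong σ Λ X R := by
  let gen (F : Set (Term σ X × Term σ X)) : CongAbove (termAlg σ X) (presCong σ Λ X ∅) :=
    ⟨presCong σ Λ X F, presCong_isCongruence Λ X F, presCong_mono F.empty_subset⟩
  obtain ⟨_, ⟨F, ⟨hFR, hF⟩, rfl⟩, hmax⟩ := hwf.wf.has_min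
    (gen '' {F | F ⊆ R ∧ F.Finite}) ⟨_, ∅, ⟨R.empty_subset, Set.finite_empty⟩, rfl⟩
  refine ⟨F, hFR, hF, le_antisymm (presCong_mono hFR) ?_⟩
  refine presCong_le (presCong_isCongruence Λ X F) (fun p hp => ?_)
    fun _ hl f => presCong_of_law hl f
  have hle : gen F ≤ gen (insert p F) := presCong_mono (Set.subset_insert p F)
  have heq : gen (insert p F) = gen F :=
    (hle.lt_or_eq.resolve_left (hmax _ ⟨_, ⟨Set.insert_subset hp hFR, hF.insert p⟩, rfl⟩)).symm
  exact (congr_fun₂ (congrArg Subtype.val heq) p.1 p.2).mp (presCong_of_mem (Set.mem_insert p F))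

theorem wellFoundedGT_congAbove_presCong {R : Set (Term σ X × Term σ X)}
    (h : ∀ r, IsCongruence (termAlg σ X) r → presCong σ Λ X R ≤ r →
      ∃ E : Set (Term σ X × Term σ X), E.Finite ∧ presCong σ Λ X E = r) :
    WellFoundedGT (CongAbove (termAlg σ X) (presCong σ Λ X R)) := by
  refine wellFoundedGT_iff_monotone_chain_condition.mpr fun c => ?_
  have hc : Monotone fun n => (c n).1 := c.mono
  have hU := isCongruence_iUnion_of_monotone (fun n => (c n).2.1) hc
  obtain ⟨E, hE, hEU⟩ := h _ hU fun a b hab => ⟨0, (c 0).2.2 a b hab⟩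
  have hEsub : ∀ p ∈ E, ∃ n, (c n).1 p.1 p.2 :=
    fun p hp => (congr_fun₂ hEU p.1 p.2).mp (presCong_of_mem hp)
  choose! n hn using hEsub
  obtain ⟨N, hN⟩ := hc.directed_le.finite_set_le (hE.image n)
  have hUN : presCong σ Λ X E ≤ (c N).1 :=
    presCong_le (c N).2.1 (fun p hp => hN _ (Set.mem_image_of_mem n hp) _ _ (hn p hp))
      fun l hl f => (c N).2.2 _ _ (presCong_of_law hl f)
  exact ⟨N, fun m hm => le_antisymm (c.mono hm)
    fun a b hab => hUN a b ((congr_fun₂ hEU a b).mpr ⟨m, hab⟩)⟩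

theorem exists_finite_presCong_eq_of_forall_algIso [Finite X]
    (hfp : ∀ S : Set (Term σ X × Term σ X), ∃ R' : Set (Term σ X × Term σ X),
      R'.Finite ∧ AlgIso (presAlg σ Λ X S) (presAlg σ Λ X R'))
    {r : Term σ X → Term σ X → Prop} (hr : IsCongruence (termAlg σ X) r)
    (hΛ : ∀ l ∈ Λ, ∀ f : ℕ → Term σ X, r (l.1.subst f) (l.2.subst f)) :
    ∃ E : Set (Term σ X × Term σ X), E.Finite ∧ presCong σ Λ X E = r := by
  obtain ⟨R', hR', hiso⟩ := hfp {p | r p.1 p.2}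
  rw [← presCong_setOf_eq hr hΛ]
  exact exists_finite_presCong_eq_of_algIso hR' hiso

end ChainConditions

end Presentations

theorem stmt10_general (σ : Signature) (Λ : Set (Term σ ℕ × Term σ ℕ)) :
    (∀ (k : ℕ) (R : Set (Term σ (Fin k) × Term σ (Fin k))),
        HasACCcong (presAlg σ Λ (Fin k) R)) ↔
    (∀ (k : ℕ) (R : Set (Term σ (Fin k) × Term σ (Fin k))),
        ∃ R' : Set (Term σ (Fin k) × Term σ (Fin k)),
          R'.Finite ∧ AlgIso (presAlg σ Λ (Fin k) R) (presAlg σ Λ (Fin k) R')) := by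
  constructor
  · intro hACC k R
    have hwf := (hasACCcong_quotAlg_iff (presCong_isCongruence Λ (Fin k) ∅)).mp (hACC k ∅)
    obtain ⟨F, -, hF, hFR⟩ := exists_finite_presCong_eq_of_wellFoundedGT (hwf := hwf) R
    exact ⟨F, hF, algIso_presAlg_of_presCong_eq hFR.symm⟩
  · intro hfp k R
    refine (hasACCcong_quotAlg_iff (presCong_isCongruence Λ (Fin k) R)).mpr
      (wellFoundedGT_congAbove_presCong fun r hr hRr => ?_)
    exact exists_finite_presCong_eq_of_forall_algIso (hfp k) hr
      fun l hl f => hRr _ _ (presCong_of_law hl f)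

/-- For a variety of finite type, the class of finitely generated (equivalently, for
each n, of n-generated) algebras satisfies ACC on congruence lattices if and only if
every algebra in the class has a finite presentation. -/
theorem stmt10 (σ : Signature) (hfin : Finite σ.I) (Λ : Set (Term σ ℕ × Term σ ℕ)) :
    (∀ (k : ℕ) (R : Set (Term σ (Fin k) × Term σ (Fin k))),
        HasACCcong (presAlg σ Λ (Fin k) R)) ↔
    (∀ (k : ℕ) (R : Set (Term σ (Fin k) × Term σ (Fin k))),
        ∃ R' : Set (Term σ (Fin k) × Term σ (Fin k)),
          R'.Finite ∧ AlgIso (presAlg σ Λ (Fin k) R) (presAlg σ Λ (Fin k) R')) :=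
  stmt10_general σ Λ
end

section
/- Let M ⊆ ℕ^n and for each i < n let A_i be the set of tuples x ∈ (ℕ ∪ {∞})^n with exactly i coordinates equal to ∞ such that x beats M (i.e., x is not coordinatewise ≥ any element of M) and no x' ≠ x obtained from x by replacing some finite coordinates by ∞ beats M. Then each A_i is finite. -/
/-!
An infinite set of minimal beaters would contain, by Dickson's lemma for `ℕ∞ⁿ`, a strictly
increasing sequence `x₀ < x₁ < ⋯`. Its supremum `z` still beats `M`, since a finite tuple below
`z` is already below some `x_m`. Each finite coordinate of `z` is attained at a common stage `K`,
so `z` arises from `x_K` by replacing finite coordinates by `∞`; minimality of `x_K` then forces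
`z = x_K`, contradicting strict growth.
-/

/-- `v` beats `S`: `v` is not coordinatewise above any element of `S`. -/
def Beats {n : ℕ} (v : Fin n → ℕ∞) (S : Set (Fin n → ℕ)) : Prop :=
  ∀ w ∈ S, ¬ (fun j => (w j : ℕ∞)) ≤ v

/-- The set `A_i(M)` of tuples with exactly `i` coordinates equal to ∞ that beat `M`,
such that no tuple obtained by replacing some finite coordinates by ∞ still beats `M`. -/
def MinBeaters (n i : ℕ) (M : Set (Fin n → ℕ)) : Set (Fin n → ℕ∞) :=
  {x | (Finset.univ.filter fun j => x j = (⊤ : ℕ∞)).card = i ∧ Beats x M ∧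
    ∀ y : Fin n → ℕ∞, y ≠ x → (∀ j, y j = x j ∨ y j = (⊤ : ℕ∞)) → ¬ Beats y M}

lemma ENat.exists_natCast_le_of_natCast_le_iSup {ι : Sort*} [Nonempty ι] {u : ι → ℕ∞} {w : ℕ}
    (h : (w : ℕ∞) ≤ ⨆ k, u k) : ∃ k, (w : ℕ∞) ≤ u k := by
  -- capping at `w` makes the supremum finite, hence attained
  have hsup : ⨆ k, u k ⊓ w = w := by rw [← iSup_inf_eq, inf_eq_right.mpr h]
  obtain ⟨k, hk⟩ := ENat.exists_eq_iSup_of_lt_top (hsup ▸ ENat.natCast_lt_top w)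
  exact ⟨k, inf_eq_right.mp (hk.trans hsup)⟩

section MonotoneSequence

variable {ι : Type*} [Finite ι] {x : ℕ → ι → ℕ∞}

lemma Monotone.exists_natCast_le_of_natCast_le_iSup (hx : Monotone x) {w : ι → ℕ}
    (h : (fun j => (w j : ℕ∞)) ≤ ⨆ k, x k) : ∃ m, (fun j => (w j : ℕ∞)) ≤ x m := by
  have hcoord : ∀ j, ∃ k, (w j : ℕ∞) ≤ x k j := fun j =>
    ENat.exists_natCast_le_of_natCast_le_iSup (by simpa only [iSup_apply] using h j)
  choose k hk using hcoord
  obtain ⟨m, hm⟩ := Finite.bddAbove_range k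
  exact ⟨m, fun j => (hk j).trans (hx (hm ⟨j, rfl⟩) j)⟩

lemma Monotone.exists_iSup_eq_or_eq_top (hx : Monotone x) :
    ∃ K, ∀ j, (⨆ k, x k) j = x K j ∨ (⨆ k, x k) j = ⊤ := by
  obtain ⟨K, hK⟩ := hx.exists_natCast_le_of_natCast_le_iSup
    (w := fun j => ((⨆ k, x k) j).toNat) fun j => ENat.natCast_toNat_le_self _
  refine ⟨K, fun j => or_iff_not_imp_right.mpr fun hfin => le_antisymm ?_ (le_iSup x K j)⟩
  simpa only [ENat.natCast_toNat hfin] using hK j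

end MonotoneSequence

variable {n : ℕ} {M : Set (Fin n → ℕ)} {x : ℕ → Fin n → ℕ∞}

lemma Monotone.beats_iSup (hx : Monotone x) (hbeats : ∀ k, Beats (x k) M) :
    Beats (⨆ k, x k) M := fun w hw hle => by
  obtain ⟨m, hm⟩ := hx.exists_natCast_le_of_natCast_le_iSup hle
  exact hbeats m w hw hm

lemma Monotone.exists_iSup_eq_of_mem_minBeaters {i : ℕ} (hx : Monotone x)
    (hmem : ∀ k, x k ∈ MinBeaters n i M) : ∃ K, ⨆ k, x k = x K := by
  obtain ⟨K, hK⟩ := hx.exists_iSup_eq_or_eq_top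
  by_contra! hne
  exact (hmem K).2.2 _ (hne K) hK (hx.beats_iSup fun k => (hmem k).2.1)

/-- Each of the sets A_i of minimal beaters of a set M ⊆ ℕ^n is finite. -/
theorem stmt13 (n : ℕ) (M : Set (Fin n → ℕ)) (i : ℕ) : (MinBeaters n i M).Finite := by
  by_contra hinf
  let e := Set.Infinite.natEmbedding _ hinf
  obtain ⟨g, hg⟩ := (Set.isPWO_of_wellQuasiOrderedLE (MinBeaters n i M)).exists_monotone_subseq
    (f := fun k => (e k : Fin n → ℕ∞)) fun k => (e k).2
  obtain ⟨K, hK⟩ := hg.exists_iSup_eq_of_mem_minBeaters fun k => (e (g k)).2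
  have hstep := le_antisymm ((le_iSup _ (K + 1)).trans hK.le) (hg K.le_succ)
  exact K.succ_ne_self (g.injective (e.injective (Subtype.ext hstep)))
end

section
/- For directed graphs arising from one-generated-per-component algebras with a single unary function: every vertex has outdegree exactly 1; any infinite connected component contains no cycle; and in any infinite component of the graph of a finitely generated such algebra there is a unique least vertex v reachable from every generator in the component, and the isomorphism type of the component is determined by the finite induced subgraph on the vertices from which v is reachable. -/
/-- The connected component of `a` in the graph of the unary function `f`
(edge u → v iff f u = v). -/
def Comp {α : Type} (f : α → α) (a : α) : Set α :=
  {b | Relation.EqvGen (fun u v => f u = v) a b}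

/-- `v` is the least vertex of the component of `a` reachable from every generator in
the component: `v` lies in the component, is reachable from each generator lying in
the component, and is not reachable from any other such vertex `u`. -/
def IsLeastJoin {α : Type} (f : α → α) (G : Finset α) (a v : α) : Prop :=
  v ∈ Comp f a ∧ (∀ x ∈ G, x ∈ Comp f a → ∃ n : ℕ, f^[n] x = v) ∧
    ∀ u, u ∈ Comp f a → (∀ x ∈ G, x ∈ Comp f a → ∃ n : ℕ, f^[n] x = u) →
      u ≠ v → ¬ ∃ n : ℕ, f^[n] u = v

/-- Isomorphism of the subgraphs induced by `S` and `T` in the graphs of `f` and `g`. -/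
def SubgraphIso {α β : Type} (f : α → α) (g : β → β) (S : Set α) (T : Set β) : Prop :=
  ∃ e : S ≃ T, ∀ u v : S, (f u = v) ↔ (g (e u) = (e v : β))

namespace S15

variable {α : Type}

theorem iter_eqv (f : α → α) (a : α) (m : ℕ) :
    Relation.EqvGen (fun u v => f u = v) a (f^[m] a) := by
  induction m with
  | zero => exact Relation.EqvGen.refl a
  | succ n ih =>
    exact Relation.EqvGen.trans _ _ _ ih
      (Relation.EqvGen.rel _ _ (Function.iterate_succ_apply' f n a).symm)

theorem mem_comp_iff (f : α → α) (a b : α) :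
    b ∈ Comp f a ↔ ∃ m n : ℕ, f^[m] a = f^[n] b := by
  constructor
  · intro h
    induction h with
    | rel u v huv => exact ⟨1, 0, huv⟩
    | refl u => exact ⟨0, 0, rfl⟩
    | symm u v _ ih => obtain ⟨m, n, h⟩ := ih; exact ⟨n, m, h.symm⟩
    | trans u v w _ _ ih1 ih2 =>
      obtain ⟨m, n, h1⟩ := ih1
      obtain ⟨p, q, h2⟩ := ih2
      refine ⟨p + m, n + q, ?_⟩
      calc f^[p + m] u = f^[p] (f^[m] u) := Function.iterate_add_apply f p m u
        _ = f^[p] (f^[n] v) := by rw [h1]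
        _ = f^[n] (f^[p] v) := by
              rw [← Function.iterate_add_apply, ← Function.iterate_add_apply]
              rw [Nat.add_comm]
        _ = f^[n] (f^[q] w) := by rw [h2]
        _ = f^[n + q] w := (Function.iterate_add_apply f n q w).symm
  · rintro ⟨m, n, h⟩
    exact Relation.EqvGen.trans _ _ _ (h ▸ iter_eqv f a m)
      (Relation.EqvGen.symm _ _ (iter_eqv f b n))

theorem comp_self (f : α → α) (a : α) : a ∈ Comp f a := Relation.EqvGen.refl a

theorem iterate_mem_comp {f : α → α} {a b : α} (h : b ∈ Comp f a) (n : ℕ) :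
    f^[n] b ∈ Comp f a := by
  rw [mem_comp_iff] at h ⊢
  obtain ⟨m, k, h⟩ := h
  exact ⟨m + n, k, by rw [Nat.add_comm, Function.iterate_add_apply, h,
    ← Function.iterate_add_apply, ← Function.iterate_add_apply, Nat.add_comm]⟩

theorem mem_comp_of_reach {f : α → α} {a b u : α} (h : b ∈ Comp f a)
    (n : ℕ) (hn : f^[n] u = b) : u ∈ Comp f a := by
  rw [mem_comp_iff] at h ⊢
  obtain ⟨m, k, h⟩ := h
  exact ⟨m, k + n, by rw [Function.iterate_add_apply, hn, h]⟩

theorem comp_rel {f : α → α} {a u v : α} (hu : u ∈ Comp f a) (hv : v ∈ Comp f a) :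
    ∃ m n : ℕ, f^[m] u = f^[n] v := by
  rw [mem_comp_iff] at hu hv
  obtain ⟨p, q, h1⟩ := hu
  obtain ⟨p', q', h2⟩ := hv
  refine ⟨q + p', q' + p, ?_⟩
  calc f^[q + p'] u = f^[p'] (f^[q] u) := by
        rw [← Function.iterate_add_apply, Nat.add_comm]
    _ = f^[p'] (f^[p] a) := by rw [h1]
    _ = f^[p] (f^[p'] a) := by
        rw [← Function.iterate_add_apply, ← Function.iterate_add_apply]
        rw [Nat.add_comm]
    _ = f^[p] (f^[q'] v) := by rw [h2]
    _ = f^[q' + p] v := by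
        rw [← Function.iterate_add_apply, Nat.add_comm]


theorem iterate_mod {f : α → α} {u : α} {k : ℕ} (hk : 0 < k) (hcyc : f^[k] u = u) :
    ∀ j, f^[j] u = f^[j % k] u := by
  intro j
  induction j using Nat.strong_induction_on with
  | _ j ih =>
    by_cases h : j < k
    · rw [Nat.mod_eq_of_lt h]
    · push_neg at h
      have hlt : j - k < j := Nat.sub_lt (lt_of_lt_of_le hk h) hk
      calc f^[j] u = f^[j - k + k] u := by rw [Nat.sub_add_cancel h]
        _ = f^[j - k] (f^[k] u) := Function.iterate_add_apply f (j-k) k u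
        _ = f^[j - k] u := by rw [hcyc]
        _ = f^[(j - k) % k] u := ih _ hlt
        _ = f^[j % k] u := by rw [← Nat.mod_eq_sub_mod h]

theorem acyclic {f : α → α} {Gf : Finset α}
    (hGf : ∀ a : α, ∃ x ∈ Gf, ∃ n : ℕ, f^[n] x = a)
    {a : α} (hinf : (Comp f a).Infinite) :
    ∀ u ∈ Comp f a, ∀ n : ℕ, 0 < n → f^[n] u ≠ u := by
  intro u hu k hk hcyc
  classical
  apply hinf
  set S : α → ℕ := fun x =>
    if h : ∃ s t : ℕ, f^[s] x = f^[t] u then h.choose else 0 with hS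
  have hfin : (((fun j => f^[j] u) '' Set.Iio k) ∪
      ⋃ x ∈ (Gf : Set α), (fun j => f^[j] x) '' Set.Iio (S x + 1)).Finite := by
    refine Set.Finite.union ((Set.finite_Iio _).image _) ?_
    exact Set.Finite.biUnion Gf.finite_toSet (fun x _ => (Set.finite_Iio _).image _)
  refine hfin.subset ?_
  intro b hb
  obtain ⟨x, hxG, m, hm⟩ := hGf b
  have hx : x ∈ Comp f a := mem_comp_of_reach hb m hm
  have hex : ∃ s t : ℕ, f^[s] x = f^[t] u := comp_rel hx hu
  obtain ⟨t, ht⟩ := hex.choose_spec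
  have hSx : f^[S x] x = f^[t] u := by rw [hS]; simp only [dif_pos hex]; exact ht
  by_cases hms : m ≤ S x
  · right
    exact Set.mem_biUnion hxG ⟨m, Set.mem_Iio.mpr (by omega), hm⟩
  · left
    push_neg at hms
    refine ⟨(m - S x + t) % k, Set.mem_Iio.mpr (Nat.mod_lt _ hk), ?_⟩
    calc f^[(m - S x + t) % k] u = f^[m - S x + t] u := (iterate_mod hk hcyc _).symm
      _ = f^[m - S x] (f^[t] u) := Function.iterate_add_apply f _ t u
      _ = f^[m - S x] (f^[S x] x) := by rw [hSx]
      _ = f^[m - S x + S x] x := (Function.iterate_add_apply f _ _ x).symm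
      _ = f^[m] x := by rw [Nat.sub_add_cancel hms.le]
      _ = b := hm

theorem orbit_inj {f : α → α} {Gf : Finset α}
    (hGf : ∀ a : α, ∃ x ∈ Gf, ∃ n : ℕ, f^[n] x = a)
    {a : α} (hinf : (Comp f a).Infinite) {u : α} (hu : u ∈ Comp f a)
    {m n : ℕ} (h : f^[m] u = f^[n] u) : m = n := by
  rcases lt_trichotomy m n with h' | h' | h'
  · exfalso
    exact acyclic hGf hinf _ (iterate_mem_comp hu m) (n - m) (by omega)
      (by rw [← Function.iterate_add_apply, Nat.sub_add_cancel h'.le]; exact h.symm)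
  · exact h'
  · exfalso
    exact acyclic hGf hinf _ (iterate_mem_comp hu n) (m - n) (by omega)
      (by rw [← Function.iterate_add_apply, Nat.sub_add_cancel h'.le]; exact h)

end S15

namespace S15
variable {α : Type}

theorem exists_common (f : α → α) (a x1 : α) (hx1 : x1 ∈ Comp f a) (G : Finset α) :
    ∃ n : ℕ, ∀ x ∈ G, x ∈ Comp f a → ∃ m, f^[m] x = f^[n] x1 := by
  classical
  induction G using Finset.induction_on with
  | empty => exact ⟨0, by simp⟩
  | @insert y s hy ih =>
    obtain ⟨n, hn⟩ := ih
    by_cases hyc : y ∈ Comp f a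
    · obtain ⟨my, ny, hmy⟩ := comp_rel hyc hx1
      refine ⟨max n ny, ?_⟩
      intro x hx hxc
      rcases Finset.mem_insert.mp hx with rfl | hxs
      · exact ⟨max n ny - ny + my, by
          rw [Function.iterate_add_apply, hmy, ← Function.iterate_add_apply,
            Nat.sub_add_cancel (le_max_right n ny)]⟩
      · obtain ⟨m, hm⟩ := hn x hxs hxc
        exact ⟨max n ny - n + m, by
          rw [Function.iterate_add_apply, hm, ← Function.iterate_add_apply,
            Nat.sub_add_cancel (le_max_left n ny)]⟩
    · refine ⟨n, ?_⟩
      intro x hx hxc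
      rcases Finset.mem_insert.mp hx with rfl | hxs
      · exact absurd hxc hyc
      · exact hn x hxs hxc

theorem exists_leastjoin {f : α → α} {Gf : Finset α}
    (hGf : ∀ a : α, ∃ x ∈ Gf, ∃ n : ℕ, f^[n] x = a)
    {a : α} (hinf : (Comp f a).Infinite) :
    ∃! v, IsLeastJoin f Gf a v := by
  classical
  obtain ⟨x1, hx1G, n1, hn1⟩ := hGf a
  have hx1 : x1 ∈ Comp f a := mem_comp_of_reach (comp_self f a) n1 hn1
  have hex : ∃ n : ℕ, ∀ x ∈ Gf, x ∈ Comp f a → ∃ m, f^[m] x = f^[n] x1 :=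
    exists_common f a x1 hx1 Gf
  set N := Nat.find hex with hN
  set v := f^[N] x1 with hvdef
  have hv : v ∈ Comp f a := iterate_mem_comp hx1 N
  have hjoin : ∀ x ∈ Gf, x ∈ Comp f a → ∃ m, f^[m] x = v := Nat.find_spec hex
  have hkey : ∀ u, u ∈ Comp f a → (∀ x ∈ Gf, x ∈ Comp f a → ∃ m, f^[m] x = u) →
      ∃ d, f^[d] v = u := by
    intro u hu hjoin'
    obtain ⟨n, hn⟩ := hjoin' x1 hx1G hx1
    have hnS : ∀ x ∈ Gf, x ∈ Comp f a → ∃ m, f^[m] x = f^[n] x1 := by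
      intro x hxG hxC
      obtain ⟨m, hm⟩ := hjoin' x hxG hxC
      exact ⟨m, by rw [hm, hn]⟩
    have hNn : N ≤ n := Nat.find_min' hex hnS
    exact ⟨n - N, by
      rw [hvdef, ← Function.iterate_add_apply, Nat.sub_add_cancel hNn, hn]⟩
  have hleast : IsLeastJoin f Gf a v := by
    refine ⟨hv, hjoin, ?_⟩
    rintro u hu hj hne ⟨p, hp⟩
    obtain ⟨d, hd⟩ := hkey u hu hj
    have hpd : f^[p + d] v = v := by rw [Function.iterate_add_apply, hd, hp]
    have h0 : p + d = 0 := orbit_inj hGf hinf hv (n := 0) (by simpa using hpd)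
    have hd0 : d = 0 := by omega
    exact hne (by rw [← hd, hd0, Function.iterate_zero_apply])
  refine ⟨v, hleast, ?_⟩
  intro y hy
  obtain ⟨d, hd⟩ := hkey y hy.1 hy.2.1
  by_contra hne
  exact hy.2.2 v hv hjoin (fun h => hne h.symm) ⟨d, hd⟩

end S15

namespace S15

theorem tail_finite {α : Type} {f : α → α} {Gf : Finset α}
    (hGf : ∀ a : α, ∃ x ∈ Gf, ∃ n : ℕ, f^[n] x = a)
    {a : α} (hinf : (Comp f a).Infinite) {v : α} (hlj : IsLeastJoin f Gf a v) :
    {u : α | ∃ n : ℕ, f^[n] u = v}.Finite := by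
  classical
  have hvC : v ∈ Comp f a := hlj.1
  set Nx : α → ℕ := fun x => if h : ∃ n : ℕ, f^[n] x = v then Nat.find h else 0 with hNx
  refine Set.Finite.subset (Set.Finite.biUnion Gf.finite_toSet
    (fun x _ => (Set.finite_Iio (Nx x + 1)).image (fun j => f^[j] x))) ?_
  rintro u ⟨p, hp⟩
  have huC : u ∈ Comp f a := mem_comp_of_reach hvC p hp
  obtain ⟨x, hxG, m, hm⟩ := hGf u
  have hxC : x ∈ Comp f a := mem_comp_of_reach huC m hm
  obtain ⟨nx, hnx⟩ := hlj.2.1 x hxG hxC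
  have hmp : f^[p + m] x = v := by rw [Function.iterate_add_apply, hm]; exact hp
  have hpmn : p + m = nx := orbit_inj hGf hinf hxC (by rw [hmp, hnx])
  have hexx : ∃ n : ℕ, f^[n] x = v := ⟨nx, hnx⟩
  have hNxx : Nx x = nx := by
    rw [hNx]; simp only [dif_pos hexx]
    exact orbit_inj hGf hinf hxC (by rw [Nat.find_spec hexx, hnx])
  exact Set.mem_biUnion hxG ⟨m, Set.mem_Iio.mpr (by omega), hm⟩

theorem extend_iso {α β : Type} {f : α → α} {g : β → β}
    {Gf : Finset α} (hGf : ∀ a : α, ∃ x ∈ Gf, ∃ n : ℕ, f^[n] x = a)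
    {Gg : Finset β} (hGg : ∀ b : β, ∃ x ∈ Gg, ∃ n : ℕ, g^[n] x = b)
    {a : α} {b : β} (hinfa : (Comp f a).Infinite) (hinfb : (Comp g b).Infinite)
    {v : α} {w : β} (hva : IsLeastJoin f Gf a v) (hwb : IsLeastJoin g Gg b w)
    (h : SubgraphIso f g {u : α | ∃ n : ℕ, f^[n] u = v} {u : β | ∃ n : ℕ, g^[n] u = w}) :
    SubgraphIso f g (Comp f a) (Comp g b) := by
  classical
  set T : Set α := {u : α | ∃ n : ℕ, f^[n] u = v} with hT
  set U : Set β := {u : β | ∃ n : ℕ, g^[n] u = w} with hU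
  obtain ⟨e, he⟩ := h
  have hvC : v ∈ Comp f a := hva.1
  have hwC : w ∈ Comp g b := hwb.1
  have hvT : v ∈ T := ⟨0, rfl⟩
  have hwU : w ∈ U := ⟨0, rfl⟩
  have hTC : ∀ u ∈ T, u ∈ Comp f a := fun u hu => mem_comp_of_reach hvC hu.choose hu.choose_spec
  have hUC : ∀ u ∈ U, u ∈ Comp g b := fun u hu => mem_comp_of_reach hwC hu.choose hu.choose_spec
  have hrayinj : ∀ k k' : ℕ, f^[k] v = f^[k'] v → k = k' :=
    fun k k' hk => orbit_inj hGf hinfa hvC hk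
  have hrayinj' : ∀ k k' : ℕ, g^[k] w = g^[k'] w → k = k' :=
    fun k k' hk => orbit_inj hGg hinfb hwC hk
  have hrayT : ∀ k : ℕ, f^[k] v ∈ T → k = 0 := by
    rintro k ⟨p, hp⟩
    have : f^[p + k] v = f^[0] v := by
      rw [Function.iterate_add_apply, hp, Function.iterate_zero_apply]
    have := hrayinj _ _ this
    omega
  have hrayU : ∀ k : ℕ, g^[k] w ∈ U → k = 0 := by
    rintro k ⟨p, hp⟩
    have : g^[p + k] w = g^[0] w := by
      rw [Function.iterate_add_apply, hp, Function.iterate_zero_apply]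
    have := hrayinj' _ _ this
    omega
  have hfvT : f v ∉ T := fun hmem => by
    have := hrayT 1 (by simpa using hmem); omega
  have hgwU : g w ∉ U := fun hmem => by
    have := hrayU 1 (by simpa using hmem); omega
  have hstepT : ∀ u ∈ T, u ≠ v → f u ∈ T := by
    intro u hu hne
    obtain ⟨p, hp⟩ := hu
    match p, hp with
    | 0, hp => exact absurd hp hne
    | (q+1), hp => exact ⟨q, by rw [← Function.iterate_succ_apply]; exact hp⟩
  have hstepU : ∀ u ∈ U, u ≠ w → g u ∈ U := by
    intro u hu hne
    obtain ⟨p, hp⟩ := hu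
    match p, hp with
    | 0, hp => exact absurd hp hne
    | (q+1), hp => exact ⟨q, by rw [← Function.iterate_succ_apply]; exact hp⟩
  have hdecomp : ∀ u ∈ Comp f a, u ∉ T → ∃ k : ℕ, 0 < k ∧ f^[k] v = u := by
    intro u hu hnt
    obtain ⟨x, hxG, m, hm⟩ := hGf u
    have hxC : x ∈ Comp f a := mem_comp_of_reach hu m hm
    obtain ⟨nx, hnx⟩ := hva.2.1 x hxG hxC
    by_cases hmn : m ≤ nx
    · exfalso
      apply hnt
      exact ⟨nx - m, by
        rw [← hm, ← Function.iterate_add_apply, Nat.sub_add_cancel hmn]; exact hnx⟩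
    · push_neg at hmn
      refine ⟨m - nx, by omega, ?_⟩
      rw [← hnx, ← Function.iterate_add_apply, Nat.sub_add_cancel hmn.le]
      exact hm
  have hdecomp' : ∀ u ∈ Comp g b, u ∉ U → ∃ k : ℕ, 0 < k ∧ g^[k] w = u := by
    intro u hu hnt
    obtain ⟨x, hxG, m, hm⟩ := hGg u
    have hxC : x ∈ Comp g b := mem_comp_of_reach hu m hm
    obtain ⟨nx, hnx⟩ := hwb.2.1 x hxG hxC
    by_cases hmn : m ≤ nx
    · exfalso
      apply hnt
      exact ⟨nx - m, by
        rw [← hm, ← Function.iterate_add_apply, Nat.sub_add_cancel hmn]; exact hnx⟩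
    · push_neg at hmn
      refine ⟨m - nx, by omega, ?_⟩
      rw [← hnx, ← Function.iterate_add_apply, Nat.sub_add_cancel hmn.le]
      exact hm
  -- e maps v to w
  have hev : ((e ⟨v, hvT⟩ : U) : β) = w := by
    by_contra hne
    have hg : g ((e ⟨v, hvT⟩ : U) : β) ∈ U := hstepU _ (e ⟨v, hvT⟩).2 hne
    have hback : f v = ((e.symm ⟨g ((e ⟨v, hvT⟩ : U) : β), hg⟩ : T) : α) :=
      (he ⟨v, hvT⟩ (e.symm ⟨g ((e ⟨v, hvT⟩ : U) : β), hg⟩)).mpr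
        (by rw [Equiv.apply_symm_apply])
    exact hfvT (hback ▸ (e.symm ⟨g ((e ⟨v, hvT⟩ : U) : β), hg⟩).2)
  -- index on the ray
  set K : α → ℕ := fun u => if h : ∃ k : ℕ, f^[k] v = u then Nat.find h else 0 with hK
  have hKspec : ∀ u ∈ Comp f a, u ∉ T → f^[K u] v = u ∧ 0 < K u := by
    intro u hu hnt
    obtain ⟨k, hk0, hk⟩ := hdecomp u hu hnt
    have hexk : ∃ k : ℕ, f^[k] v = u := ⟨k, hk⟩
    have h1 : f^[K u] v = u := by rw [hK]; simp only [dif_pos hexk]; exact Nat.find_spec hexk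
    refine ⟨h1, ?_⟩
    rcases Nat.eq_zero_or_pos (K u) with h0 | h0
    · exfalso; apply hnt; rw [← h1, h0, Function.iterate_zero_apply]; exact hvT
    · exact h0
  -- the extended map
  set φ : ↥(Comp f a) → ↥(Comp g b) := fun u =>
    if h : (u : α) ∈ T then ⟨((e ⟨(u : α), h⟩ : U) : β), hUC _ (e ⟨(u : α), h⟩).2⟩
    else ⟨g^[K (u : α)] w, iterate_mem_comp hwC _⟩ with hφ
  have hφinj : Function.Injective φ := by
    intro u1 u2 h12
    have h12' := congrArg Subtype.val h12
    by_cases h1 : (u1 : α) ∈ T <;> by_cases h2 : (u2 : α) ∈ T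
    · simp only [hφ, dif_pos h1, dif_pos h2] at h12'
      have := e.injective (Subtype.ext h12')
      exact Subtype.ext (Subtype.mk_eq_mk.mp this)
    · simp only [hφ, dif_pos h1, dif_neg h2] at h12'
      exfalso
      obtain ⟨hk, hk0⟩ := hKspec _ u2.2 h2
      have : K (u2 : α) = 0 := hrayU _ (h12' ▸ (e ⟨(u1 : α), h1⟩).2)
      omega
    · simp only [hφ, dif_neg h1, dif_pos h2] at h12'
      exfalso
      obtain ⟨hk, hk0⟩ := hKspec _ u1.2 h1
      have : K (u1 : α) = 0 := hrayU _ (h12'.symm ▸ (e ⟨(u2 : α), h2⟩).2)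
      omega
    · simp only [hφ, dif_neg h1, dif_neg h2] at h12'
      obtain ⟨hk1, _⟩ := hKspec _ u1.2 h1
      obtain ⟨hk2, _⟩ := hKspec _ u2.2 h2
      have := hrayinj' _ _ h12'
      exact Subtype.ext (by rw [← hk1, ← hk2, this])
  have hφsurj : Function.Surjective φ := by
    intro y
    by_cases hy : (y : β) ∈ U
    · set x : T := e.symm ⟨(y : β), hy⟩ with hx
      refine ⟨⟨(x : α), hTC _ x.2⟩, ?_⟩
      apply Subtype.ext
      have hmem : ((⟨(x : α), hTC _ x.2⟩ : (Comp f a : Set α)) : α) ∈ T := x.2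
      simp only [hφ, dif_pos hmem]
      have : (⟨(x : α), hmem⟩ : T) = x := Subtype.ext rfl
      rw [this, hx, Equiv.apply_symm_apply]
    · obtain ⟨k, hk0, hkw⟩ := hdecomp' _ y.2 hy
      have humem : f^[k] v ∈ Comp f a := iterate_mem_comp hvC k
      have hunt : f^[k] v ∉ T := fun hmem => by have := hrayT k hmem; omega
      refine ⟨⟨f^[k] v, humem⟩, ?_⟩
      apply Subtype.ext
      simp only [hφ, dif_neg hunt]
      obtain ⟨hk1, _⟩ := hKspec _ humem hunt
      have : K (f^[k] v) = k := hrayinj _ _ hk1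
      rw [this, hkw]
  refine ⟨Equiv.ofBijective φ ⟨hφinj, hφsurj⟩, ?_⟩
  intro u1 u2
  show (f (u1 : α) = (u2 : α)) ↔ (g ((φ u1 : ↥(Comp g b)) : β) = ((φ u2 : ↥(Comp g b)) : β))
  by_cases h1 : (u1 : α) ∈ T <;> by_cases h2 : (u2 : α) ∈ T
  · simp only [hφ, dif_pos h1, dif_pos h2]
    exact he ⟨(u1 : α), h1⟩ ⟨(u2 : α), h2⟩
  · -- u1 ∈ T, u2 on the ray
    obtain ⟨hk2, hk20⟩ := hKspec _ u2.2 h2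
    simp only [hφ, dif_pos h1, dif_neg h2]
    by_cases h1v : (u1 : α) = v
    · have hew : ((e ⟨(u1 : α), h1⟩ : U) : β) = w := by
        have : (⟨(u1 : α), h1⟩ : T) = ⟨v, hvT⟩ := Subtype.ext h1v
        rw [this, hev]
      rw [hew, h1v]
      constructor
      · intro hfv
        have h1k : 1 = K (u2 : α) := hrayinj _ _ (by
          rw [Function.iterate_one, hfv, hk2])
        rw [← h1k, Function.iterate_one]
      · intro hgw
        have h1k : 1 = K (u2 : α) := hrayinj' _ _ (by
          rw [Function.iterate_one]; exact hgw)
        rw [← hk2, ← h1k, Function.iterate_one]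
    · have hft : f (u1 : α) ∈ T := hstepT _ h1 h1v
      have hgu : g ((e ⟨(u1 : α), h1⟩ : U) : β) = ((e ⟨f (u1 : α), hft⟩ : U) : β) :=
        (he ⟨(u1 : α), h1⟩ ⟨f (u1 : α), hft⟩).mp rfl
      constructor
      · intro hf
        exact absurd (hf ▸ hft) h2
      · intro hg'
        exfalso
        have : K (u2 : α) = 0 := hrayU _ (by rw [← hg', hgu]; exact (e ⟨f (u1 : α), hft⟩).2)
        omega
  · -- u1 on the ray, u2 ∈ T
    obtain ⟨hk1, hk10⟩ := hKspec _ u1.2 h1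
    simp only [hφ, dif_neg h1, dif_pos h2]
    constructor
    · intro hf
      exfalso
      have hmem : f^[K (u1 : α) + 1] v ∈ T := by
        rw [Function.iterate_succ_apply', hk1, hf]; exact h2
      have := hrayT _ hmem; omega
    · intro hg'
      exfalso
      have : g^[K (u1 : α) + 1] w ∈ U := by
        rw [Function.iterate_succ_apply', hg']
        exact (e ⟨(u2 : α), h2⟩).2
      have := hrayU _ this; omega
  · -- both on the ray
    obtain ⟨hk1, hk10⟩ := hKspec _ u1.2 h1
    obtain ⟨hk2, hk20⟩ := hKspec _ u2.2 h2
    simp only [hφ, dif_neg h1, dif_neg h2]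
    constructor
    · intro hf
      have : K (u1 : α) + 1 = K (u2 : α) := hrayinj _ _ (by
        rw [Function.iterate_succ_apply', hk1, hf, hk2])
      rw [← this, Function.iterate_succ_apply']
    · intro hg'
      have : K (u1 : α) + 1 = K (u2 : α) := hrayinj' _ _ (by
        rw [Function.iterate_succ_apply']; exact hg')
      rw [← hk2, ← this, Function.iterate_succ_apply', hk1]

end S15

/-- Structure of graphs of finitely generated algebras with one unary function:
every vertex has outdegree exactly 1; infinite components contain no cycle; every
infinite component has a unique least vertex reachable from all its generators; the
set of vertices from which this least vertex is reachable is finite; and the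
isomorphism type of an infinite component is determined by the finite induced
subgraph on that set. -/
theorem stmt15 {α β : Type} (f : α → α) (g : β → β)
    (Gf : Finset α) (hGf : ∀ a : α, ∃ x ∈ Gf, ∃ n : ℕ, f^[n] x = a)
    (Gg : Finset β) (hGg : ∀ b : β, ∃ x ∈ Gg, ∃ n : ℕ, g^[n] x = b) :
    (∀ u : α, ∃! v : α, f u = v) ∧
    (∀ a : α, (Comp f a).Infinite → ∀ u ∈ Comp f a, ∀ n : ℕ, 0 < n → f^[n] u ≠ u) ∧
    (∀ a : α, (Comp f a).Infinite → ∃! v : α, IsLeastJoin f Gf a v) ∧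
    (∀ (a : α) (b : β), (Comp f a).Infinite → (Comp g b).Infinite →
      ∀ v w, IsLeastJoin f Gf a v → IsLeastJoin g Gg b w →
        ({u : α | ∃ n : ℕ, f^[n] u = v}.Finite ∧
          (SubgraphIso f g {u : α | ∃ n : ℕ, f^[n] u = v} {u : β | ∃ n : ℕ, g^[n] u = w} →
            SubgraphIso f g (Comp f a) (Comp g b)))) := by
  refine ⟨fun u => ⟨f u, rfl, fun y hy => hy.symm⟩, ?_, ?_, ?_⟩
  · intro a hinf
    exact S15.acyclic hGf hinf
  · intro a hinf
    exact S15.exists_leastjoin hGf hinf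
  · intro a b hinfa hinfb v w hva hwb
    exact ⟨S15.tail_finite hGf hinfa hva,
      fun h => S15.extend_iso hGf hGg hinfa hinfb hva hwb h⟩
end
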